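/- If a d-multiple Walsh series converges over cubes to zero at every point of 𝔾^d outside a closed set F, then the support of the quasimeasure τ generated by the series is contained in F; that is, for every dyadic cube Δ₀ disjoint from F and every dyadic cube Δ ⊆ Δ₀, one has τ(Δ) = 0. -/

import Mathlib

open Filter

/-- The dyadic group `𝔾`: 0-1 sequences with coordinatewise addition mod 2. -/
abbrev DyadicGroup : Type := ℕ → ZMod 2

/-- Walsh function `W_n(g) = ∏_k (-1)^{g_k n_k}` (Paley enumeration). -/
noncomputable def walsh (n : ℕ) (g : DyadicGroup) : ℝ :=
  ∏ k ∈ Finset.range n, if n.testBit k = true ∧ g k = 1 then (-1 : ℝ) else 1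

/-- `d`-dimensional Walsh function `W_n(g) = ∏_l W_{n^l}(g^l)`. -/
noncomputable def walshD {d : ℕ} (n : Fin d → ℕ) (g : Fin d → DyadicGroup) : ℝ :=
  ∏ l, walsh (n l) (g l)

/-- Cubic partial sum `S_N(g) = ∑_{n < N·1} c_n W_n(g)`. -/
noncomputable def cubicSum {d : ℕ} (c : (Fin d → ℕ) → ℂ) (N : ℕ)
    (g : Fin d → DyadicGroup) : ℂ :=
  ∑ n ∈ Fintype.piFinset (fun _ : Fin d => Finset.range N), c n * (walshD n g : ℂ)

/-- The dyadic cube of rank `k` with base `m : Fin d → Fin k → ZMod 2`. -/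
def dyadicCube (d k : ℕ) (m : Fin d → Fin k → ZMod 2) :
    Set (Fin d → DyadicGroup) :=
  {g | ∀ (l : Fin d) (j : Fin k), g l (j : ℕ) = m l j}

/-- A representative point of the cube of rank `k` with base `m`. -/
def basePoint {d k : ℕ} (m : Fin d → Fin k → ZMod 2) : Fin d → DyadicGroup :=
  fun l j => if h : j < k then m l ⟨j, h⟩ else 0

/-- The quasimeasure generated by a Walsh series:
`τ(Δ^{(k)}) = 2^{-kd} S_{2^k}(Δ^{(k)})`. -/
noncomputable def generatedQM {d : ℕ} (c : (Fin d → ℕ) → ℂ) (k : ℕ)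
    (m : Fin d → Fin k → ZMod 2) : ℂ :=
  ((2 : ℂ) ^ (k * d))⁻¹ * cubicSum c (2 ^ k) (basePoint m)

open Function

/-!
On a cube `Δ` of rank `k`, `S_{2^k}` is the average of `S_{2^{k+1}}` over the `2^d` subcubes of
rank `k + 1`, so `|S_{2^{k+1}}| ≥ |S_{2^k}(Δ)|` on one of them. Iterating gives nested cubes that
shrink to a point `g ∈ Δ` with `|S_{2^j}(g)| ≥ |S_{2^k}(Δ)|` for all `j ≥ k`. As `g ∉ F`, the left
side tends to `0`, hence `τ(Δ) = 0`.
-/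

lemma walsh_congr_of_lt_two_pow {n k : ℕ} (hn : n < 2 ^ k) {g g' : DyadicGroup}
    (h : ∀ j < k, g j = g' j) : walsh n g = walsh n g' := by
  refine Finset.prod_congr rfl fun j _ => ?_
  by_cases hjk : j < k
  · rw [h j hjk]
  · have : n.testBit j = false :=
      Nat.testBit_lt_two_pow (hn.trans_le (Nat.pow_le_pow_right two_pos (not_lt.mp hjk)))
    simp [this]

lemma cubicSum_two_pow_congr {d : ℕ} (c : (Fin d → ℕ) → ℂ) {k : ℕ}
    {g g' : Fin d → DyadicGroup} (h : ∀ l, ∀ j < k, g l j = g' l j) :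
    cubicSum c (2 ^ k) g = cubicSum c (2 ^ k) g' := by
  refine Finset.sum_congr rfl fun n hn => ?_
  have hn : ∀ l, n l < 2 ^ k := by simpa using hn
  congr 2
  exact Finset.prod_congr rfl fun l _ => walsh_congr_of_lt_two_pow (hn l) (h l)

lemma walsh_update_of_testBit_eq_false {n k : ℕ} (h : n.testBit k = false) (g : DyadicGroup)
    (e : ZMod 2) : walsh n (update g k e) = walsh n g := by
  refine Finset.prod_congr rfl fun j _ => ?_
  rcases eq_or_ne j k with rfl | hj
  · simp [h]
  · rw [update_of_ne hj]

lemma walsh_update_one_of_testBit {n k : ℕ} (h : n.testBit k = true) (g : DyadicGroup) :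
    walsh n (update g k 1) = -walsh n (update g k 0) := by
  have hk : k ∈ Finset.range n :=
    Finset.mem_range.mpr (Nat.lt_two_pow_self.trans_le (Nat.ge_two_pow_of_testBit h))
  have hfactor : ∀ e : ZMod 2,
      walsh n (update g k e) = (if e = 1 then -1 else 1) *
        ∏ j ∈ (Finset.range n).erase k, if n.testBit j = true ∧ g j = 1 then (-1 : ℝ) else 1 := by
    intro e
    rw [walsh, ← Finset.mul_prod_erase _ _ hk]
    congr 1
    · simp [h]
    · exact Finset.prod_congr rfl fun j hj => by rw [update_of_ne (Finset.ne_of_mem_erase hj)]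
  simp [hfactor]

lemma sum_walsh_update {n k : ℕ} (hn : n < 2 ^ (k + 1)) (g : DyadicGroup) :
    ∑ e : ZMod 2, walsh n (update g k e) = if n < 2 ^ k then 2 * walsh n g else 0 := by
  rw [show (Finset.univ : Finset (ZMod 2)) = {0, 1} from rfl, Finset.sum_pair zero_ne_one]
  split_ifs with hlt
  · simp only [walsh_update_of_testBit_eq_false (Nat.testBit_lt_two_pow hlt)]
    ring
  · rw [walsh_update_one_of_testBit
      (Nat.testBit_of_two_pow_le_and_two_pow_add_one_gt (not_lt.mp hlt) hn)]
    exact add_neg_cancel _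

/-- The `2^d` choices of `ε` give one point in each subcube of rank `k + 1` of the cube of rank `k`
containing `g`. -/
def setDigit {d : ℕ} (g : Fin d → DyadicGroup) (k : ℕ) (ε : Fin d → ZMod 2) :
    Fin d → DyadicGroup :=
  fun l => update (g l) k (ε l)

lemma sum_walshD_setDigit {d k : ℕ} {n : Fin d → ℕ} (hn : ∀ l, n l < 2 ^ (k + 1))
    (g : Fin d → DyadicGroup) :
    ∑ ε, walshD n (setDigit g k ε) = if ∀ l, n l < 2 ^ k then 2 ^ d * walshD n g else 0 := by
  simp only [walshD, setDigit]
  rw [← Fintype.prod_sum (fun l e => walsh (n l) (update (g l) k e))]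
  simp only [sum_walsh_update (hn _), Finset.prod_ite_zero, Finset.mem_univ, true_implies,
    Finset.prod_mul_distrib, Finset.prod_const, Finset.card_univ, Fintype.card_fin]

lemma sum_cubicSum_setDigit {d : ℕ} (c : (Fin d → ℕ) → ℂ) (k : ℕ) (g : Fin d → DyadicGroup) :
    ∑ ε, cubicSum c (2 ^ (k + 1)) (setDigit g k ε) = 2 ^ d * cubicSum c (2 ^ k) g := by
  set cube := fun r : ℕ => Fintype.piFinset fun _ : Fin d => Finset.range (2 ^ r)
  have hsub : cube k ⊆ cube (k + 1) := Fintype.piFinset_subset _ _ fun _ =>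
    Finset.range_subset_range.mpr (Nat.pow_le_pow_right two_pos k.le_succ)
  calc ∑ ε, cubicSum c (2 ^ (k + 1)) (setDigit g k ε)
      = ∑ n ∈ cube (k + 1), if n ∈ cube k then 2 ^ d * (c n * walshD n g) else 0 := by
        simp only [cubicSum]
        rw [Finset.sum_comm]
        refine Finset.sum_congr rfl fun n hn => ?_
        have hn : ∀ l, n l < 2 ^ (k + 1) := by simpa [cube] using hn
        rw [← Finset.mul_sum, ← Complex.ofReal_sum, sum_walshD_setDigit hn]
        simp only [cube, Fintype.mem_piFinset, Finset.mem_range]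
        split_ifs <;> push_cast <;> ring
    _ = 2 ^ d * cubicSum c (2 ^ k) g := by
      rw [Finset.sum_ite_mem, Finset.inter_eq_right.mpr hsub, cubicSum, Finset.mul_sum]

lemma exists_norm_cubicSum_le_setDigit {d : ℕ} (c : (Fin d → ℕ) → ℂ) (k : ℕ)
    (g : Fin d → DyadicGroup) :
    ∃ ε, ‖cubicSum c (2 ^ k) g‖ ≤ ‖cubicSum c (2 ^ (k + 1)) (setDigit g k ε)‖ := by
  have hsum : ∑ _ε : Fin d → ZMod 2, ‖cubicSum c (2 ^ k) g‖ ≤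
      ∑ ε, ‖cubicSum c (2 ^ (k + 1)) (setDigit g k ε)‖ :=
    calc ∑ _ε : Fin d → ZMod 2, ‖cubicSum c (2 ^ k) g‖
        = ‖∑ ε, cubicSum c (2 ^ (k + 1)) (setDigit g k ε)‖ := by
          simp [sum_cubicSum_setDigit]
      _ ≤ _ := norm_sum_le _ _
  obtain ⟨ε, -, hε⟩ := Finset.exists_le_of_sum_le Finset.univ_nonempty hsum
  exact ⟨ε, hε⟩

lemma exists_eq_of_succ_eq {ι α : Type*} {k : ℕ} (P : ℕ → ι → ℕ → α)
    (hP : ∀ j l, ∀ i < k + j, P (j + 1) l i = P j l i) :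
    ∃ G : ι → ℕ → α, ∀ j l, ∀ i < k + j, G l i = P j l i := by
  have hstable : ∀ a b, a ≤ b → ∀ l, ∀ i < k + a, P b l i = P a l i := by
    intro a b hab
    induction b, hab using Nat.le_induction with
    | base => exact fun _ _ _ => rfl
    | succ b hab ih => exact fun l i hi => (hP b l i (by omega)).trans (ih l i hi)
  refine ⟨fun l i => P (i + 1) l i, fun j l i hi => ?_⟩
  rcases le_total j (i + 1) with h | h
  · exact hstable j (i + 1) h l i hi
  · exact (hstable (i + 1) j h l i (by omega)).symm

lemma exists_norm_cubicSum_le {d : ℕ} (c : (Fin d → ℕ) → ℂ) (k : ℕ) (g : Fin d → DyadicGroup) :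
    ∃ G : Fin d → DyadicGroup, (∀ l, ∀ i < k, G l i = g l i) ∧
      ∀ j, ‖cubicSum c (2 ^ k) g‖ ≤ ‖cubicSum c (2 ^ (k + j)) G‖ := by
  choose ε hε using exists_norm_cubicSum_le_setDigit c
  let P : ℕ → Fin d → DyadicGroup :=
    fun j => Nat.rec g (fun j x => setDigit x (k + j) (ε (k + j) x)) j
  have hP_succ : ∀ j, P (j + 1) = setDigit (P j) (k + j) (ε (k + j) (P j)) := fun _ => rfl
  have hP_norm : ∀ j, ‖cubicSum c (2 ^ k) g‖ ≤ ‖cubicSum c (2 ^ (k + j)) (P j)‖ := by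
    intro j
    induction j with
    | zero => exact le_rfl
    | succ j ih => exact ih.trans (hε (k + j) (P j))
  obtain ⟨G, hG⟩ := exists_eq_of_succ_eq (k := k) P fun j l i hi => by
    rw [hP_succ]
    exact update_of_ne (by omega) _ _
  refine ⟨G, fun l i hi => hG 0 l i hi, fun j => ?_⟩
  rw [cubicSum_two_pow_congr c (hG j)]
  exact hP_norm j

theorem support_subset_of_convergence_general (d : ℕ) (c : (Fin d → ℕ) → ℂ)
    (F : Set (Fin d → DyadicGroup))
    (hconv : ∀ g ∉ F, Tendsto (fun N => cubicSum c N g) atTop (nhds 0)) :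
    ∀ (k₀ : ℕ) (m₀ : Fin d → Fin k₀ → ZMod 2),
      Disjoint (dyadicCube d k₀ m₀) F →
      ∀ (k : ℕ) (m : Fin d → Fin k → ZMod 2),
        dyadicCube d k m ⊆ dyadicCube d k₀ m₀ →
        generatedQM c k m = 0 := by
  intro k₀ m₀ hdisj k m hsub
  obtain ⟨G, hG_base, hG_norm⟩ := exists_norm_cubicSum_le c k (basePoint m)
  have hG_mem : G ∈ dyadicCube d k m := fun l j => by
    rw [hG_base l j j.isLt]
    exact dif_pos j.isLt
  have hG_notMem : G ∉ F := Set.disjoint_left.mp hdisj (hsub hG_mem)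
  have hrank : Tendsto (fun j => 2 ^ (k + j)) atTop atTop :=
    (tendsto_pow_atTop_atTop_of_one_lt one_lt_two).comp
      (tendsto_atTop_mono (Nat.le_add_left · k) tendsto_id)
  have hlim : Tendsto (fun j => ‖cubicSum c (2 ^ (k + j)) G‖) atTop (nhds 0) := by
    simpa using ((hconv G hG_notMem).comp hrank).norm
  have hτ : cubicSum c (2 ^ k) (basePoint m) = 0 :=
    norm_le_zero_iff.mp (ge_of_tendsto' hlim hG_norm)
  simp [generatedQM, hτ]

/-- If a `d`-multiple Walsh series converges over cubes to zero at every point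
outside a closed set `F`, then the support of the generated quasimeasure is
contained in `F`: for every dyadic cube `Δ₀` disjoint from `F` and every
dyadic cube `Δ ⊆ Δ₀`, `τ(Δ) = 0`. -/
theorem support_subset_of_convergence (d : ℕ) (c : (Fin d → ℕ) → ℂ)
    (F : Set (Fin d → DyadicGroup)) (hF : IsClosed F)
    (hconv : ∀ g ∉ F, Tendsto (fun N => cubicSum c N g) atTop (nhds 0)) :
    ∀ (k₀ : ℕ) (m₀ : Fin d → Fin k₀ → ZMod 2),
      Disjoint (dyadicCube d k₀ m₀) F →
      ∀ (k : ℕ) (m : Fin d → Fin k → ZMod 2),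
        dyadicCube d k m ⊆ dyadicCube d k₀ m₀ →
        generatedQM c k m = 0 :=
  support_subset_of_convergence_general d c F hconv
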